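/- arXiv:math/0703533 — 4 statements merged into one kernel-verified Lean document; each statement's English description precedes it below -/
import Mathlib

section
/- Let A be a Hermitian operator on a finite-dimensional Hilbert space with spectral radius 1, second largest eigenvalue modulus λ < 1, maximal eigenspace A_max with orthogonal projection P_max, and let U be unitary with ‖P_max U v‖ ≤ d‖v‖ for all v ∈ A_max, where 0 ≤ d < 1. Then there exists a constant g(λ, d) < 1 (depending only on λ and d) such that ‖(UA)² v‖ ≤ g(λ, d) ‖v‖ for every vector v; consequently ‖(UA)^k‖_op ≤ g(λ,d)^{⌊k/2⌋}. -/
/-!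
Split `v = x + y` along `V ⊕ Vᗮ` and put `w = UAv`. Since `A` is isometric on `V` and contracts
`Vᗮ` by `λ`, every `z` satisfies `‖Az‖² ≤ (1 - λ²)‖Pz‖² + λ²‖z‖²`. If `‖y‖ ≥ (1 - d)/2 ‖v‖`,
the first application of `A` already loses a fixed fraction of `‖v‖²`. Otherwise `v` is almost
in `V`, so `‖Pw‖ ≤ d‖x‖ + λ‖y‖ ≤ (1 + d)/2 ‖v‖` because `U` pushes `V` away from itself, and the
second application of `A` contracts. Either way
`‖(UA)²v‖² ≤ (1 - (1 - λ²)((1 - d)/2)²)‖v‖²`; the bound on `(UA)^k` follows from `‖UA‖ ≤ 1`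
and submultiplicativity.
-/

open scoped InnerProductSpace

noncomputable def twoStepConstant (lam d : ℝ) : ℝ := 1 - (1 - lam ^ 2) * ((1 - d) / 2) ^ 2

theorem twoStepConstant_nonneg {lam d : ℝ} (hd0 : 0 ≤ d) (hd1 : d ≤ 1) :
    0 ≤ twoStepConstant lam d := by
  unfold twoStepConstant; nlinarith [sq_nonneg lam, sq_nonneg ((1 - d) / 2)]

theorem twoStepConstant_lt_one {lam d : ℝ} (hlam : lam ^ 2 < 1) (hd : d < 1) :
    twoStepConstant lam d < 1 := by
  unfold twoStepConstant; nlinarith [sq_pos_of_pos (by linarith : 0 < (1 - d) / 2)]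

-- `a, b, r` stand for the norms of `Pv, v - Pv, v`, and `p, s` for those of `Pw, w`, `w = UAv`.
theorem two_step_scalar_bound {lam d a b r p s : ℝ} (hlam0 : 0 ≤ lam) (hlam1 : lam ≤ 1)
    (hd0 : 0 ≤ d) (hd1 : d ≤ 1) (hb : 0 ≤ b) (hr : 0 ≤ r)
    (habr : a ^ 2 + b ^ 2 = r ^ 2) (hp : 0 ≤ p) (hpd : p ≤ d * a + lam * b) (hps : p ≤ s)
    (hs : s ^ 2 ≤ a ^ 2 + lam ^ 2 * b ^ 2) :
    (1 - lam ^ 2) * p ^ 2 + lam ^ 2 * s ^ 2 ≤ twoStepConstant lam d * r ^ 2 := by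
  set c := 1 - lam ^ 2 with hc_def
  set δ := (1 - d) / 2 with hδ_def
  have hc : 0 ≤ c := by nlinarith
  have hδ : 0 ≤ δ := by linarith
  have hδ1 : δ ≤ 1 := by linarith
  have hG : twoStepConstant lam d * r ^ 2 = r ^ 2 - c * (δ * r) ^ 2 := by
    unfold twoStepConstant; ring
  rw [hG]
  rcases le_or_gt b (δ * r) with hb_small | hb_large
  · have har : a ≤ r := abs_le_of_sq_le_sq' (by nlinarith) hr |>.2
    have hp_small : p ≤ (1 - δ) * r := by
      have : lam * b ≤ δ * r := (mul_le_of_le_one_left hb hlam1).trans hb_small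
      nlinarith [mul_le_mul_of_nonneg_left har hd0]
    have hp2 : p ^ 2 ≤ (1 - δ) ^ 2 * r ^ 2 := by
      rw [← mul_pow]; exact pow_le_pow_left₀ hp hp_small 2
    have hsr : s ^ 2 ≤ r ^ 2 := by nlinarith
    calc c * p ^ 2 + lam ^ 2 * s ^ 2 ≤ c * ((1 - δ) ^ 2 * r ^ 2) + lam ^ 2 * r ^ 2 := by gcongr
      _ ≤ r ^ 2 - c * (δ * r) ^ 2 := by
        nlinarith [mul_nonneg (mul_nonneg hc hδ) (mul_nonneg (sub_nonneg.2 hδ1) (sq_nonneg r))]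
  · have hb2 : (δ * r) ^ 2 ≤ b ^ 2 := pow_le_pow_left₀ (by positivity) hb_large.le 2
    have hp2 : p ^ 2 ≤ s ^ 2 := pow_le_pow_left₀ hp hps 2
    calc c * p ^ 2 + lam ^ 2 * s ^ 2 ≤ s ^ 2 := by nlinarith
      _ ≤ r ^ 2 - c * b ^ 2 := by linarith
      _ ≤ r ^ 2 - c * (δ * r) ^ 2 := by gcongr

structure HasSpectralGap {𝕜 E : Type*} [RCLike 𝕜] [NormedAddCommGroup E] [InnerProductSpace 𝕜 E]
    (A : E →L[𝕜] E) (V : Submodule 𝕜 E) (lam : ℝ) : Prop where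
  mapsTo : ∀ x ∈ V, A x ∈ V
  norm_map_of_mem : ∀ x ∈ V, ‖A x‖ = ‖x‖
  mapsTo_orthogonal : ∀ y ∈ Vᗮ, A y ∈ Vᗮ
  norm_map_le_of_mem_orthogonal : ∀ y ∈ Vᗮ, ‖A y‖ ≤ lam * ‖y‖

namespace HasSpectralGap

variable {𝕜 E : Type*} [RCLike 𝕜] [NormedAddCommGroup E] [InnerProductSpace 𝕜 E]
  {A : E →L[𝕜] E} {V : Submodule 𝕜 E} [V.HasOrthogonalProjection] {lam : ℝ}

theorem norm_sq_apply_le (hA : HasSpectralGap A V lam) (z : E) :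
    ‖A z‖ ^ 2 ≤ (1 - lam ^ 2) * ‖V.starProjection z‖ ^ 2 + lam ^ 2 * ‖z‖ ^ 2 := by
  set x := V.starProjection z
  set y := Vᗮ.starProjection z
  have hx : x ∈ V := V.starProjection_apply_mem z
  have hy : y ∈ Vᗮ := Vᗮ.starProjection_apply_mem z
  have hAz : A z = A x + A y := by
    rw [← map_add, V.starProjection_add_starProjection_orthogonal]
  have hAxy : ⟪A x, A y⟫_𝕜 = 0 :=
    Submodule.inner_right_of_mem_orthogonal (hA.mapsTo x hx) (hA.mapsTo_orthogonal y hy)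
  have hAy : ‖A y‖ ^ 2 ≤ lam ^ 2 * ‖y‖ ^ 2 := by
    rw [← mul_pow]
    exact pow_le_pow_left₀ (norm_nonneg _) (hA.norm_map_le_of_mem_orthogonal y hy) 2
  have hz := V.norm_sq_eq_add_norm_sq_starProjection z
  calc ‖A z‖ ^ 2 = ‖x‖ ^ 2 + ‖A y‖ ^ 2 := by
        rw [hAz, sq, norm_add_sq_eq_norm_sq_add_norm_sq_of_inner_eq_zero _ _ hAxy,
          hA.norm_map_of_mem x hx, sq, sq]
    _ ≤ _ := by linear_combination hAy - lam ^ 2 * hz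

theorem norm_apply_le (hA : HasSpectralGap A V lam) (hlam : lam ^ 2 ≤ 1) (z : E) :
    ‖A z‖ ≤ ‖z‖ := by
  have hPz : ‖V.starProjection z‖ ^ 2 ≤ ‖z‖ ^ 2 :=
    pow_le_pow_left₀ (norm_nonneg _) (V.norm_starProjection_apply_le z) 2
  refine (pow_le_pow_iff_left₀ (norm_nonneg _) (norm_nonneg _) two_ne_zero).mp ?_
  calc ‖A z‖ ^ 2 ≤ (1 - lam ^ 2) * ‖V.starProjection z‖ ^ 2 + lam ^ 2 * ‖z‖ ^ 2 :=
        hA.norm_sq_apply_le z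
    _ ≤ ‖z‖ ^ 2 := by nlinarith

theorem norm_mul_pow_two_apply_le (hA : HasSpectralGap A V lam) (hlam0 : 0 ≤ lam)
    (hlam1 : lam ≤ 1) {U : E →L[𝕜] E} (hU : ∀ z, ‖U z‖ = ‖z‖) {d : ℝ} (hd0 : 0 ≤ d)
    (hd1 : d ≤ 1) (hcontr : ∀ v ∈ V, ‖V.starProjection (U v)‖ ≤ d * ‖v‖) (v : E) :
    ‖((U * A) ^ 2) v‖ ≤ √(twoStepConstant lam d) * ‖v‖ := by
  set x := V.starProjection v
  set y := Vᗮ.starProjection v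
  set w := U (A v)
  have hx : x ∈ V := V.starProjection_apply_mem v
  have hy : y ∈ Vᗮ := Vᗮ.starProjection_apply_mem v
  have hv := V.norm_sq_eq_add_norm_sq_starProjection v
  have hPw : ‖V.starProjection w‖ ≤ d * ‖x‖ + lam * ‖y‖ := by
    have hUAx : ‖V.starProjection (U (A x))‖ ≤ d * ‖x‖ := by
      simpa only [hA.norm_map_of_mem x hx] using hcontr _ (hA.mapsTo x hx)
    have hUAy : ‖V.starProjection (U (A y))‖ ≤ lam * ‖y‖ :=
      (V.norm_starProjection_apply_le _).trans <|
        (hU _).trans_le (hA.norm_map_le_of_mem_orthogonal y hy)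
    calc ‖V.starProjection w‖ = ‖V.starProjection (U (A x)) + V.starProjection (U (A y))‖ := by
          rw [← map_add, ← map_add, ← map_add, V.starProjection_add_starProjection_orthogonal]
      _ ≤ d * ‖x‖ + lam * ‖y‖ := (norm_add_le _ _).trans (add_le_add hUAx hUAy)
  have hw : ‖w‖ ^ 2 ≤ ‖x‖ ^ 2 + lam ^ 2 * ‖y‖ ^ 2 := by
    rw [hU]; linear_combination hA.norm_sq_apply_le v + lam ^ 2 * hv
  have hAw : ‖A w‖ ^ 2 ≤ twoStepConstant lam d * ‖v‖ ^ 2 :=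
    (hA.norm_sq_apply_le w).trans <| two_step_scalar_bound hlam0 hlam1 hd0 hd1
      (norm_nonneg y) (norm_nonneg v) hv.symm (norm_nonneg _) hPw
      (V.norm_starProjection_apply_le w) hw
  have hG0 := twoStepConstant_nonneg (lam := lam) hd0 hd1
  have hUAUA : ((U * A) ^ 2) v = U (A w) := rfl
  rw [hUAUA, hU, ← pow_le_pow_iff_left₀ (norm_nonneg _) (by positivity) two_ne_zero, mul_pow,
    Real.sq_sqrt hG0]
  exact hAw

end HasSpectralGap

theorem norm_pow_le_pow_half {R : Type*} [SeminormedRing R] {T : R} {g : ℝ}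
    (h1 : ‖(1 : R)‖ ≤ 1) (hT : ‖T‖ ≤ 1) (hT2 : ‖T ^ 2‖ ≤ g) (k : ℕ) :
    ‖T ^ k‖ ≤ g ^ (k / 2) := by
  induction k using Nat.twoStepInduction with
  | zero => simpa using h1
  | one => simpa using hT
  | more k ih _ =>
    have hg : 0 ≤ g := (norm_nonneg _).trans hT2
    calc ‖T ^ (k + 2)‖ ≤ ‖T ^ k‖ * ‖T ^ 2‖ := by rw [pow_add]; exact norm_mul_le _ _
      _ ≤ g ^ (k / 2) * g := mul_le_mul ih hT2 (norm_nonneg _) (by positivity)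
      _ = g ^ ((k + 2) / 2) := by rw [Nat.add_div_right k two_pos, pow_succ]

theorem stmt_11_general {E : Type*} [NormedAddCommGroup E] [InnerProductSpace ℂ E]
    [FiniteDimensional ℂ E]
    (A : E →L[ℂ] E)
    (V : Submodule ℂ E)
    (hVinv : ∀ x ∈ V, A x ∈ V) (hViso : ∀ x ∈ V, ‖A x‖ = ‖x‖)
    (lam : ℝ) (hlam0 : 0 ≤ lam) (hlam1 : lam < 1)
    (hperp : ∀ y ∈ Vᗮ, A y ∈ Vᗮ ∧ ‖A y‖ ≤ lam * ‖y‖)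
    (U : E →L[ℂ] E) (hU : U ∈ unitary (E →L[ℂ] E))
    (d : ℝ) (hd0 : 0 ≤ d) (hd1 : d < 1)
    (hcontr : ∀ v ∈ V, ‖(Submodule.orthogonalProjection V (U v) : E)‖ ≤ d * ‖v‖) :
    ∃ g : ℝ, 0 ≤ g ∧ g < 1 ∧
      (∀ v : E, ‖((U * A) ^ 2) v‖ ≤ g * ‖v‖) ∧
      ∀ k : ℕ, ‖(U * A) ^ k‖ ≤ g ^ (k / 2) := by
  have hA : HasSpectralGap A V lam :=
    ⟨hVinv, hViso, fun y hy => (hperp y hy).1, fun y hy => (hperp y hy).2⟩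
  have hUiso : ∀ z, ‖U z‖ = ‖z‖ := U.norm_map_of_mem_unitary hU
  have hUA : ‖U * A‖ ≤ 1 := ContinuousLinearMap.opNorm_le_bound _ zero_le_one fun v => by
    rw [one_mul]
    exact (hUiso (A v)).trans_le (hA.norm_apply_le (pow_le_one₀ hlam0 hlam1.le) v)
  have hUA2 := hA.norm_mul_pow_two_apply_le hlam0 hlam1.le hUiso hd0 hd1.le hcontr
  have hG : twoStepConstant lam d < 1 :=
    twoStepConstant_lt_one (pow_lt_one₀ hlam0 hlam1 two_ne_zero) hd1
  refine ⟨√(twoStepConstant lam d), Real.sqrt_nonneg _,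
    (Real.sqrt_lt' one_pos).2 (by rwa [one_pow]), hUA2,
    norm_pow_le_pow_half ContinuousLinearMap.norm_id_le hUA
      (ContinuousLinearMap.opNorm_le_bound _ (Real.sqrt_nonneg _) hUA2)⟩

/-- Two-step contraction: `A` Hermitian with spectral radius 1, top eigenspace
`V` (eigenvalues of modulus 1), remaining spectrum of modulus `≤ λ < 1`, `U`
unitary with `‖P_max U v‖ ≤ d‖v‖` on `V`, `0 ≤ d < 1`.  Then there is a
constant `g < 1` with `‖(UA)² v‖ ≤ g‖v‖` for all `v`, and consequently
`‖(UA)^k‖ ≤ g^⌊k/2⌋`. -/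
theorem stmt_11 {E : Type*} [NormedAddCommGroup E] [InnerProductSpace ℂ E]
    [FiniteDimensional ℂ E]
    (A : E →L[ℂ] E) (hA : IsSelfAdjoint A)
    (hrad : spectralRadius ℂ A = 1)
    (V : Submodule ℂ E)
    (hVinv : ∀ x ∈ V, A x ∈ V) (hViso : ∀ x ∈ V, ‖A x‖ = ‖x‖)
    (lam : ℝ) (hlam0 : 0 ≤ lam) (hlam1 : lam < 1)
    (hperp : ∀ y ∈ Vᗮ, A y ∈ Vᗮ ∧ ‖A y‖ ≤ lam * ‖y‖)
    (U : E →L[ℂ] E) (hU : U ∈ unitary (E →L[ℂ] E))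
    (d : ℝ) (hd0 : 0 ≤ d) (hd1 : d < 1)
    (hcontr : ∀ v ∈ V, ‖(Submodule.orthogonalProjection V (U v) : E)‖ ≤ d * ‖v‖) :
    ∃ g : ℝ, 0 ≤ g ∧ g < 1 ∧
      (∀ v : E, ‖((U * A) ^ 2) v‖ ≤ g * ‖v‖) ∧
      ∀ k : ℕ, ‖(U * A) ^ k‖ ≤ g ^ (k / 2) :=
  stmt_11_general A V hVinv hViso lam hlam0 hlam1 hperp U hU d hd0 hd1 hcontr
end

section
/- Let A be a Hermitian operator with spectral radius 1, second eigenvalue modulus λ < 1, and U unitary with ‖P_max U v‖ ≤ d‖v‖ on the top eigenspace, 0 ≤ d < 1. Then the spectral radius of UA is at most √(g(λ,d)) < 1, where g(λ,d) is the constant of the two-step contraction estimate. -/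
/-!
Split `x = v + w` along `V ⊕ Vᗮ`. If `‖w‖ ≥ (1 - d) / 2 * ‖x‖`, the first application of `A`
already shrinks `‖x‖²` by the factor `1 - (1 - λ²) ((1 - d) / 2)²`. Otherwise `x` is close to `V`,
so the `V`-component of `U A x` has norm at most `(1 + d) / 2 * ‖x‖`, and the second application
of `A` shrinks the remaining component by `λ`. Either way `‖(U A)² x‖ ≤ g ‖x‖` with `g < 1`, and
`ρ(U A) ≤ ‖(U A)²‖ ^ (1 / 2) ≤ √g`.
-/

open ENNReal in
theorem spectrum.spectralRadius_le_of_norm_pow_le {𝕜 A : Type*} [NontriviallyNormedField 𝕜]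
    [NormedRing A] [NormedAlgebra 𝕜 A] [CompleteSpace A] (h1 : ‖(1 : A)‖ ≤ 1) {a : A} {n : ℕ}
    (hn : n ≠ 0) {c : ℝ} (hc : 0 ≤ c) (ha : ‖a ^ n‖ ≤ c ^ n) :
    spectralRadius 𝕜 a ≤ ENNReal.ofReal c := by
  obtain ⟨m, rfl⟩ := Nat.exists_eq_succ_of_ne_zero hn
  have hpow : (‖a ^ (m + 1)‖₊ : ℝ≥0∞) ≤ ENNReal.ofReal c ^ (m + 1) := by
    rw [← ofReal_pow hc, ← enorm_eq_nnnorm, ← ofReal_norm]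
    exact ofReal_le_ofReal ha
  have hone : (‖(1 : A)‖₊ : ℝ≥0∞) ≤ 1 := by exact_mod_cast h1
  calc spectralRadius 𝕜 a
      ≤ (‖a ^ (m + 1)‖₊ : ℝ≥0∞) ^ (1 / (m + 1) : ℝ) * (‖(1 : A)‖₊ : ℝ≥0∞) ^ (1 / (m + 1) : ℝ) :=
        spectrum.spectralRadius_le_pow_nnnorm_pow_one_div 𝕜 a m
    _ ≤ (ENNReal.ofReal c ^ (m + 1)) ^ (1 / (m + 1) : ℝ) * 1 ^ (1 / (m + 1) : ℝ) := by
        gcongr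
    _ = ENNReal.ofReal c := by
        rw [one_rpow, mul_one, one_div, ← Nat.cast_succ,
          ENNReal.pow_rpow_inv_natCast m.succ_ne_zero]

noncomputable def twoStepConst (lam d : ℝ) : ℝ :=
  √(max (1 - (1 - lam ^ 2) * ((1 - d) / 2) ^ 2) (lam ^ 2 + (1 - lam ^ 2) * ((1 + d) / 2) ^ 2))

theorem twoStepConst_nonneg (lam d : ℝ) : 0 ≤ twoStepConst lam d := Real.sqrt_nonneg _

theorem sq_twoStepConst (lam d : ℝ) :
    twoStepConst lam d ^ 2 =
      max (1 - (1 - lam ^ 2) * ((1 - d) / 2) ^ 2) (lam ^ 2 + (1 - lam ^ 2) * ((1 + d) / 2) ^ 2) := by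
  refine Real.sq_sqrt ?_
  rcases le_total 0 (1 - lam ^ 2) with h | h
  · exact le_max_of_le_right (by positivity)
  · exact le_max_of_le_left (by nlinarith [sq_nonneg ((1 - d) / 2)])

theorem twoStepConst_lt_one {lam d : ℝ} (hlam0 : 0 ≤ lam) (hlam1 : lam < 1)
    (hd0 : 0 ≤ d) (hd1 : d < 1) : twoStepConst lam d < 1 := by
  have hlam : 0 < 1 - lam ^ 2 := by nlinarith
  rw [twoStepConst, Real.sqrt_lt' one_pos, one_pow, max_lt_iff]
  constructor
  · nlinarith [mul_pos hlam (pow_pos (by linarith : (0 : ℝ) < (1 - d) / 2) 2)]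
  · nlinarith [mul_pos hlam (by nlinarith : (0 : ℝ) < 1 - ((1 + d) / 2) ^ 2)]

/-- `a, b` are the norms of the components of `x` in `V` and `Vᗮ`, `r = ‖x‖`, and `p, q` those
of `U A x`. -/
theorem sq_add_sq_mul_le_twoStepConst {lam d a b p q r : ℝ} (hlam0 : 0 ≤ lam) (hlam1 : lam < 1)
    (hd0 : 0 ≤ d) (hd1 : d ≤ 1) (hb : 0 ≤ b) (hp0 : 0 ≤ p) (hr : 0 ≤ r)
    (hab : a ^ 2 + b ^ 2 = r ^ 2)
    (hpq : p ^ 2 + q ^ 2 ≤ a ^ 2 + lam ^ 2 * b ^ 2) (hp : p ≤ d * a + lam * b) :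
    p ^ 2 + lam ^ 2 * q ^ 2 ≤ twoStepConst lam d ^ 2 * r ^ 2 := by
  have hlam : 0 ≤ 1 - lam ^ 2 := by nlinarith
  rw [sq_twoStepConst]
  rcases le_total ((1 - d) / 2 * r) b with hfar | hnear
  · have hb2 : ((1 - d) / 2) ^ 2 * r ^ 2 ≤ b ^ 2 := by
      rw [← mul_pow]; exact pow_le_pow_left₀ (mul_nonneg (by linarith) hr) hfar 2
    calc p ^ 2 + lam ^ 2 * q ^ 2 ≤ p ^ 2 + q ^ 2 := by nlinarith [sq_nonneg q]
      _ ≤ r ^ 2 - (1 - lam ^ 2) * b ^ 2 := by linarith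
      _ ≤ (1 - (1 - lam ^ 2) * ((1 - d) / 2) ^ 2) * r ^ 2 := by nlinarith
      _ ≤ _ := by gcongr; exact le_max_left _ _
  · have har : a ≤ r := by nlinarith
    have hpr : p ≤ (1 + d) / 2 * r :=
      calc p ≤ d * a + lam * b := hp
        _ ≤ d * r + (1 - d) / 2 * r :=
            add_le_add (by gcongr) ((mul_le_of_le_one_left hb hlam1.le).trans hnear)
        _ = (1 + d) / 2 * r := by ring
    have hp2 : p ^ 2 ≤ ((1 + d) / 2) ^ 2 * r ^ 2 := by
      rw [← mul_pow]; exact pow_le_pow_left₀ hp0 hpr 2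
    calc p ^ 2 + lam ^ 2 * q ^ 2 = lam ^ 2 * (p ^ 2 + q ^ 2) + (1 - lam ^ 2) * p ^ 2 := by ring
      _ ≤ lam ^ 2 * r ^ 2 + (1 - lam ^ 2) * (((1 + d) / 2) ^ 2 * r ^ 2) := by
        gcongr; nlinarith [sq_nonneg lam]
      _ = (lam ^ 2 + (1 - lam ^ 2) * ((1 + d) / 2) ^ 2) * r ^ 2 := by ring
      _ ≤ _ := by gcongr; exact le_max_right _ _

section TwoStep

variable {𝕜 E : Type*} [RCLike 𝕜] [NormedAddCommGroup E] [InnerProductSpace 𝕜 E]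
  {V : Submodule 𝕜 E} [V.HasOrthogonalProjection] {A U : E →L[𝕜] E} {lam d : ℝ}

theorem norm_sq_apply_le_of_invariant (hVinv : ∀ x ∈ V, A x ∈ V) (hViso : ∀ x ∈ V, ‖A x‖ ≤ ‖x‖)
    (hperp : ∀ y ∈ Vᗮ, A y ∈ Vᗮ ∧ ‖A y‖ ≤ lam * ‖y‖) (x : E) :
    ‖A x‖ ^ 2 ≤ ‖V.starProjection x‖ ^ 2 + lam ^ 2 * ‖Vᗮ.starProjection x‖ ^ 2 := by
  set v := V.starProjection x
  set w := Vᗮ.starProjection x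
  have hv : A v ∈ V := hVinv v (V.starProjection_apply_mem x)
  have hw := hperp w (Vᗮ.starProjection_apply_mem x)
  have hAx : A x = A v + A w := by
    rw [← map_add, V.starProjection_add_starProjection_orthogonal]
  calc ‖A x‖ ^ 2 = ‖A v‖ ^ 2 + ‖A w‖ ^ 2 := by
        rw [hAx, sq, sq, sq, norm_add_sq_eq_norm_sq_add_norm_sq_of_inner_eq_zero _ _
          (Submodule.inner_right_of_mem_orthogonal hv hw.1)]
    _ ≤ ‖v‖ ^ 2 + (lam * ‖w‖) ^ 2 := by
        gcongr
        exacts [hViso v (V.starProjection_apply_mem x), hw.2]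
    _ = ‖v‖ ^ 2 + lam ^ 2 * ‖w‖ ^ 2 := by ring

theorem norm_starProjection_apply_apply_le (hd0 : 0 ≤ d) (hU : ∀ y, ‖U y‖ ≤ ‖y‖)
    (hVinv : ∀ x ∈ V, A x ∈ V) (hViso : ∀ x ∈ V, ‖A x‖ ≤ ‖x‖)
    (hperp : ∀ y ∈ Vᗮ, ‖A y‖ ≤ lam * ‖y‖)
    (hcontr : ∀ v ∈ V, ‖V.starProjection (U v)‖ ≤ d * ‖v‖) (x : E) :
    ‖V.starProjection (U (A x))‖ ≤ d * ‖V.starProjection x‖ + lam * ‖Vᗮ.starProjection x‖ := by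
  set v := V.starProjection x
  set w := Vᗮ.starProjection x
  have hv : v ∈ V := V.starProjection_apply_mem x
  have hAx : A x = A v + A w := by
    rw [← map_add, V.starProjection_add_starProjection_orthogonal]
  calc ‖V.starProjection (U (A x))‖
      ≤ ‖V.starProjection (U (A v))‖ + ‖V.starProjection (U (A w))‖ := by
        rw [hAx, map_add, map_add]; exact norm_add_le _ _
    _ ≤ d * ‖v‖ + lam * ‖w‖ := by
        gcongr
        · exact (hcontr _ (hVinv v hv)).trans (by gcongr; exact hViso v hv)
        · exact ((V.norm_starProjection_apply_le _).trans (hU _)).trans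
            (hperp w (Vᗮ.starProjection_apply_mem x))

theorem norm_mul_sq_apply_le_twoStepConst (hlam0 : 0 ≤ lam) (hlam1 : lam < 1) (hd0 : 0 ≤ d)
    (hd1 : d ≤ 1) (hU : ∀ y, ‖U y‖ ≤ ‖y‖) (hVinv : ∀ x ∈ V, A x ∈ V)
    (hViso : ∀ x ∈ V, ‖A x‖ ≤ ‖x‖) (hperp : ∀ y ∈ Vᗮ, A y ∈ Vᗮ ∧ ‖A y‖ ≤ lam * ‖y‖)
    (hcontr : ∀ v ∈ V, ‖V.starProjection (U v)‖ ≤ d * ‖v‖) (x : E) :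
    ‖((U * A) ^ 2) x‖ ≤ twoStepConst lam d * ‖x‖ := by
  set y := U (A x)
  have hy : ‖V.starProjection y‖ ^ 2 + ‖Vᗮ.starProjection y‖ ^ 2 ≤
      ‖V.starProjection x‖ ^ 2 + lam ^ 2 * ‖Vᗮ.starProjection x‖ ^ 2 := by
    rw [← Submodule.norm_sq_eq_add_norm_sq_starProjection y V]
    exact (pow_le_pow_left₀ (norm_nonneg _) (hU _) 2).trans
      (norm_sq_apply_le_of_invariant hVinv hViso hperp x)
  have hAy : ‖A y‖ ^ 2 ≤ (twoStepConst lam d * ‖x‖) ^ 2 :=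
    calc ‖A y‖ ^ 2 ≤ ‖V.starProjection y‖ ^ 2 + lam ^ 2 * ‖Vᗮ.starProjection y‖ ^ 2 :=
          norm_sq_apply_le_of_invariant hVinv hViso hperp y
      _ ≤ twoStepConst lam d ^ 2 * ‖x‖ ^ 2 :=
          sq_add_sq_mul_le_twoStepConst hlam0 hlam1 hd0 hd1 (norm_nonneg _) (norm_nonneg _)
            (norm_nonneg x) (Submodule.norm_sq_eq_add_norm_sq_starProjection x V).symm hy
            (norm_starProjection_apply_apply_le hd0 hU hVinv hViso (fun y hy ↦ (hperp y hy).2)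
              hcontr x)
      _ = (twoStepConst lam d * ‖x‖) ^ 2 := by ring
  calc ‖((U * A) ^ 2) x‖ = ‖U (A y)‖ := by rw [sq]; rfl
    _ ≤ ‖A y‖ := hU _
    _ ≤ twoStepConst lam d * ‖x‖ :=
        (pow_le_pow_iff_left₀ (norm_nonneg _)
          (mul_nonneg (twoStepConst_nonneg lam d) (norm_nonneg x)) two_ne_zero).mp hAy

end TwoStep

theorem stmt_12_general {E : Type*} [NormedAddCommGroup E] [InnerProductSpace ℂ E]
    [FiniteDimensional ℂ E]
    (A : E →L[ℂ] E)
    (V : Submodule ℂ E)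
    (hVinv : ∀ x ∈ V, A x ∈ V) (hViso : ∀ x ∈ V, ‖A x‖ = ‖x‖)
    (lam : ℝ) (hlam0 : 0 ≤ lam) (hlam1 : lam < 1)
    (hperp : ∀ y ∈ Vᗮ, A y ∈ Vᗮ ∧ ‖A y‖ ≤ lam * ‖y‖)
    (U : E →L[ℂ] E) (hU : U ∈ unitary (E →L[ℂ] E))
    (d : ℝ) (hd0 : 0 ≤ d) (hd1 : d < 1)
    (hcontr : ∀ v ∈ V, ‖(Submodule.orthogonalProjectionOnto V (U v) : E)‖ ≤ d * ‖v‖) :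
    ∃ g : ℝ, 0 ≤ g ∧ g < 1 ∧
      (∀ v : E, ‖((U * A) ^ 2) v‖ ≤ g * ‖v‖) ∧
      Real.sqrt g < 1 ∧
      spectralRadius ℂ (U * A) ≤ ENNReal.ofReal (Real.sqrt g) := by
  set g := twoStepConst lam d
  have hg0 : 0 ≤ g := twoStepConst_nonneg lam d
  have hg1 : g < 1 := twoStepConst_lt_one hlam0 hlam1 hd0 hd1
  have hbound : ∀ v : E, ‖((U * A) ^ 2) v‖ ≤ g * ‖v‖ :=
    norm_mul_sq_apply_le_twoStepConst hlam0 hlam1 hd0 hd1.le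
      (fun y ↦ (ContinuousLinearMap.norm_map_of_mem_unitary hU y).le) hVinv
      (fun x hx ↦ (hViso x hx).le) hperp hcontr
  refine ⟨g, hg0, hg1, hbound, (Real.sqrt_lt' one_pos).2 (by rwa [one_pow]), ?_⟩
  refine spectrum.spectralRadius_le_of_norm_pow_le ContinuousLinearMap.norm_id_le two_ne_zero
    (Real.sqrt_nonneg g) ?_
  rw [Real.sq_sqrt hg0]
  exact ContinuousLinearMap.opNorm_le_bound _ hg0 hbound

/-- Under the two-step contraction hypotheses (`A` Hermitian with spectral
radius 1, top eigenspace `V`, rest of spectrum of modulus `≤ λ < 1`, `U`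
unitary with `‖P_max U v‖ ≤ d‖v‖` on `V`, `0 ≤ d < 1`), the spectral radius of
`UA` is at most `√g < 1`, where `g` is the two-step contraction constant. -/
theorem stmt_12 {E : Type*} [NormedAddCommGroup E] [InnerProductSpace ℂ E]
    [FiniteDimensional ℂ E]
    (A : E →L[ℂ] E) (hA : IsSelfAdjoint A)
    (hrad : spectralRadius ℂ A = 1)
    (V : Submodule ℂ E)
    (hVinv : ∀ x ∈ V, A x ∈ V) (hViso : ∀ x ∈ V, ‖A x‖ = ‖x‖)
    (lam : ℝ) (hlam0 : 0 ≤ lam) (hlam1 : lam < 1)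
    (hperp : ∀ y ∈ Vᗮ, A y ∈ Vᗮ ∧ ‖A y‖ ≤ lam * ‖y‖)
    (U : E →L[ℂ] E) (hU : U ∈ unitary (E →L[ℂ] E))
    (d : ℝ) (hd0 : 0 ≤ d) (hd1 : d < 1)
    (hcontr : ∀ v ∈ V, ‖(Submodule.orthogonalProjectionOnto V (U v) : E)‖ ≤ d * ‖v‖) :
    ∃ g : ℝ, 0 ≤ g ∧ g < 1 ∧
      (∀ v : E, ‖((U * A) ^ 2) v‖ ≤ g * ‖v‖) ∧
      Real.sqrt g < 1 ∧
      spectralRadius ℂ (U * A) ≤ ENNReal.ofReal (Real.sqrt g) :=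
  stmt_12_general A V hVinv hViso lam hlam0 hlam1 hperp U hU d hd0 hd1 hcontr
end

section
/- In the special case λ = 0: if A = P is an orthogonal projection onto a subspace V, and U is unitary with ‖P U v‖ ≤ d‖v‖ for all v ∈ V where 0 ≤ d < 1, then ‖(UP)² v‖ ≤ d ‖v‖ for all v, and hence the spectral radius of UP is at most √d < 1. -/
/-!
For `v ∈ E`, the vector `P v` lies in `V`, so `(UP)² v = U (P (U (P v)))` has norm at most
`d ‖P v‖ ≤ d ‖v‖`. Hence `‖(UP)²‖ ≤ d`, and the bound `ρ(a) ≤ ‖a ^ n‖ ^ (1 / n)` with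
`n = 2` gives `ρ(UP) ≤ √d`.
-/

open ENNReal

theorem spectrum.spectralRadius_le_ofReal_rpow_of_norm_pow_le {𝕜 A : Type*} [NormedField 𝕜]
    [NormedRing A] [NormedAlgebra 𝕜 A] [CompleteSpace A] (h1 : ‖(1 : A)‖ ≤ 1) {a : A} {n : ℕ}
    {c : ℝ} (h : ‖a ^ (n + 1)‖ ≤ c) :
    spectralRadius 𝕜 a ≤ ENNReal.ofReal (c ^ (1 / (n + 1) : ℝ)) := by
  have hc : 0 ≤ c := (norm_nonneg _).trans h
  have hexp : (0 : ℝ) ≤ 1 / (n + 1) := by positivity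
  have hpow : (‖a ^ (n + 1)‖₊ : ℝ≥0∞) ≤ ENNReal.ofReal c := by
    rw [← ENNReal.ofReal_coe_nnreal, coe_nnnorm]
    exact ENNReal.ofReal_le_ofReal h
  have hone : (‖(1 : A)‖₊ : ℝ≥0∞) ≤ 1 := by exact_mod_cast h1
  calc spectralRadius 𝕜 a
      ≤ (‖a ^ (n + 1)‖₊ : ℝ≥0∞) ^ (1 / (n + 1) : ℝ) * (‖(1 : A)‖₊ : ℝ≥0∞) ^ (1 / (n + 1) : ℝ) :=
        spectrum.spectralRadius_le_pow_nnnorm_pow_one_div 𝕜 a n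
    _ ≤ ENNReal.ofReal c ^ (1 / (n + 1) : ℝ) * 1 ^ (1 / (n + 1) : ℝ) := by gcongr
    _ = ENNReal.ofReal (c ^ (1 / (n + 1) : ℝ)) := by
        rw [ENNReal.one_rpow, mul_one, ENNReal.ofReal_rpow_of_nonneg hc hexp]

theorem Submodule.norm_mul_starProjection_sq_apply_le {𝕜 E : Type*} [RCLike 𝕜]
    [NormedAddCommGroup E] [InnerProductSpace 𝕜 E] (V : Submodule 𝕜 E)
    [V.HasOrthogonalProjection] {U : E →L[𝕜] E} (hU : ∀ x, ‖U x‖ ≤ ‖x‖) {d : ℝ} (hd : 0 ≤ d)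
    (hcontr : ∀ v ∈ V, ‖V.starProjection (U v)‖ ≤ d * ‖v‖) (v : E) :
    ‖((U * V.starProjection) ^ 2) v‖ ≤ d * ‖v‖ :=
  calc ‖((U * V.starProjection) ^ 2) v‖ = ‖U (V.starProjection (U (V.starProjection v)))‖ := by
        rw [sq]; rfl
    _ ≤ ‖V.starProjection (U (V.starProjection v))‖ := hU _
    _ ≤ d * ‖V.starProjection v‖ := hcontr _ (V.starProjection_apply_mem v)
    _ ≤ d * ‖v‖ := mul_le_mul_of_nonneg_left (V.norm_starProjection_apply_le v) hd

/-- Special case `λ = 0`: if `P` is the orthogonal projection onto a subspace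
`V` of a finite-dimensional Hilbert space and `U` is unitary with
`‖P(Uv)‖ ≤ d‖v‖` for all `v ∈ V`, `0 ≤ d < 1`, then `‖(UP)² v‖ ≤ d‖v‖` for all
`v`, and the spectral radius of `UP` is at most `√d < 1`. -/
theorem stmt_13 {E : Type*} [NormedAddCommGroup E] [InnerProductSpace ℂ E]
    [FiniteDimensional ℂ E]
    (V : Submodule ℂ E) (P : E →L[ℂ] E)
    (hP : P = V.subtypeL ∘L V.orthogonalProjectionOnto)
    (U : E →L[ℂ] E) (hU : U ∈ unitary (E →L[ℂ] E))
    (d : ℝ) (hd0 : 0 ≤ d) (hd1 : d < 1)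
    (hcontr : ∀ v ∈ V, ‖P (U v)‖ ≤ d * ‖v‖) :
    (∀ v : E, ‖((U * P) ^ 2) v‖ ≤ d * ‖v‖) ∧
      Real.sqrt d < 1 ∧
      spectralRadius ℂ (U * P) ≤ ENNReal.ofReal (Real.sqrt d) := by
  obtain rfl : P = V.starProjection := hP
  have hsq := V.norm_mul_starProjection_sq_apply_le
    (fun x ↦ (U.norm_map_of_mem_unitary hU x).le) hd0 hcontr
  refine ⟨hsq, (Real.sqrt_lt' one_pos).mpr (by simpa using hd1), ?_⟩
  have hρ := spectrum.spectralRadius_le_ofReal_rpow_of_norm_pow_le (𝕜 := ℂ) (n := 1)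
    ContinuousLinearMap.norm_id_le (ContinuousLinearMap.opNorm_le_bound _ hd0 hsq)
  rwa [Real.sqrt_eq_rpow, show (1 : ℝ) / 2 = 1 / ((1 : ℕ) + 1) by norm_num]
end

section
/- Let G be a finite strongly connected aperiodic graph with vertices labeled by elements t₁,…,tₙ generating a finite group Γ, such that no one-dimensional complex representation of Γ maps all tᵢ to the same complex number. Then for every nontrivial irreducible unitary representation ρ of Γ, the spectral radius of U_ρ (A(G) ⊗ I) is strictly smaller than the Perron–Frobenius eigenvalue of A(G). -/
open Matrix
open scoped ENNReal NNReal

section Helpers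

lemma norm_mulVec_unitary' {k : ℕ} {U : Matrix (Fin k) (Fin k) ℂ}
    (hU : U ∈ Matrix.unitaryGroup (Fin k) ℂ) (y : EuclideanSpace ℂ (Fin k)) :
    ‖(Matrix.toEuclideanLin U) y‖ = ‖y‖ := by
  have h1 : star U * U = 1 := (Unitary.mem_iff.mp hU).1
  have h2 : (Matrix.toEuclideanLin (star U)) ((Matrix.toEuclideanLin U) y) = y := by
    rw [Matrix.toEuclideanLin_apply, Matrix.toEuclideanLin_apply]
    simp [Matrix.mulVec_mulVec, h1]
  have h3 : (inner ℂ ((Matrix.toEuclideanLin U) y) ((Matrix.toEuclideanLin U) y) : ℂ)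
      = inner ℂ y y := by
    have h4 := Matrix.toEuclideanLin_conjTranspose_eq_adjoint U
    rw [show Uᴴ = star U from rfl] at h4
    calc (inner ℂ ((Matrix.toEuclideanLin U) y) ((Matrix.toEuclideanLin U) y) : ℂ)
        = inner ℂ ((LinearMap.adjoint (Matrix.toEuclideanLin U)) ((Matrix.toEuclideanLin U) y)) y := by
          rw [LinearMap.adjoint_inner_left]
      _ = inner ℂ y y := by rw [← h4, h2]
  rw [inner_self_eq_norm_sq_to_K (𝕜 := ℂ), inner_self_eq_norm_sq_to_K (𝕜 := ℂ)] at h3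
  have h5 : ‖(Matrix.toEuclideanLin U) y‖ ^ 2 = ‖y‖ ^ 2 := by exact_mod_cast h3
  nlinarith [norm_nonneg ((Matrix.toEuclideanLin U) y), norm_nonneg y]

lemma sameRay_of_norm_sum_eq {E : Type*} [NormedAddCommGroup E] [NormedSpace ℝ E]
    [StrictConvexSpace ℝ E] {ι : Type*} [Fintype ι] (f : ι → E)
    (h : ‖∑ j, f j‖ = ∑ j, ‖f j‖) (i : ι) :
    SameRay ℝ (f i) (∑ j, f j) := by
  classical
  set rest := ∑ j ∈ Finset.univ.erase i, f j with hrest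
  have hsplit : ∑ j, f j = f i + rest :=
    (Finset.add_sum_erase _ f (Finset.mem_univ i)).symm
  have hns : ∑ j, ‖f j‖ = ‖f i‖ + ∑ j ∈ Finset.univ.erase i, ‖f j‖ :=
    (Finset.add_sum_erase _ (fun j => ‖f j‖) (Finset.mem_univ i)).symm
  have hle : ‖rest‖ ≤ ∑ j ∈ Finset.univ.erase i, ‖f j‖ := norm_sum_le _ _
  have heq : ‖f i + rest‖ = ‖f i‖ + ‖rest‖ := by
    have h1 : ‖f i + rest‖ ≤ ‖f i‖ + ‖rest‖ := norm_add_le _ _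
    have h2 : ‖f i‖ + ∑ j ∈ Finset.univ.erase i, ‖f j‖ = ‖f i + rest‖ := by
      rw [← hns, ← hsplit]; exact h.symm
    linarith
  have hsr : SameRay ℝ (f i) rest := sameRay_iff_norm_add.mpr heq
  rw [hsplit]
  exact SameRay.add_right SameRay.rfl hsr

lemma pos_entry_path {n : ℕ} (B : Matrix (Fin n) (Fin n) ℕ) (P : Fin n → Prop)
    (hstep : ∀ j j', 0 < B j j' → P j → P j') :
    ∀ m (j j' : Fin n), 0 < (B ^ m) j j' → P j → P j' := by
  intro m
  induction m with
  | zero =>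
    intro j j' h hp
    simp only [pow_zero, Matrix.one_apply] at h
    split_ifs at h with hjj
    · rwa [← hjj]
    · omega
  | succ m ih =>
    intro j j' h hp
    rw [pow_succ, Matrix.mul_apply] at h
    have hex : ∃ l, 0 < (B ^ m) j l * B l j' := by
      by_contra hc
      push_neg at hc
      simp only [Nat.le_zero] at hc
      simp [Finset.sum_eq_zero (fun l _ => hc l)] at h
    obtain ⟨l, hl⟩ := hex
    have h1 : 0 < (B ^ m) j l := Nat.pos_of_ne_zero (by intro h0; simp [h0] at hl)
    have h2 : 0 < B l j' := Nat.pos_of_ne_zero (by intro h0; simp [h0] at hl)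
    exact hstep l j' h2 (ih j l h1 hp)

section Perron
variable {n : ℕ} {A : Matrix (Fin n) (Fin n) ℝ} {lam : ℝ} {x w : Fin n → ℝ}

lemma perron_core (hsym : A.IsSymm) (heig : A.mulVec x = lam • x) :
    ∑ i, x i * (A.mulVec w) i = lam * ∑ i, x i * w i := by
  have h1 : ∑ i, x i * (A.mulVec w) i = dotProduct x (A.mulVec w) := rfl
  rw [h1, Matrix.dotProduct_mulVec]
  have h2 : Matrix.vecMul x A = lam • x := by
    rw [← hsym.eq, Matrix.vecMul_transpose, heig]
  rw [h2, smul_dotProduct]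
  rfl

lemma perron_le (hsym : A.IsSymm) (hx : ∀ i, 0 < x i)
    (heig : A.mulVec x = lam • x) (hw : ∀ i, 0 ≤ w i) {j₀ : Fin n} (hj₀ : 0 < w j₀)
    {c : ℝ} (hc : ∀ i, c * w i ≤ A.mulVec w i) : c ≤ lam := by
  have hS : 0 < ∑ i, x i * w i := by
    apply Finset.sum_pos' (fun i _ => mul_nonneg (hx i).le (hw i))
    exact ⟨j₀, Finset.mem_univ _, mul_pos (hx j₀) hj₀⟩
  have h1 : c * ∑ i, x i * w i ≤ lam * ∑ i, x i * w i := by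
    rw [← perron_core hsym heig, Finset.mul_sum]
    apply Finset.sum_le_sum
    intro i _
    calc c * (x i * w i) = x i * (c * w i) := by ring
      _ ≤ x i * (A.mulVec w) i := mul_le_mul_of_nonneg_left (hc i) (hx i).le
  exact le_of_mul_le_mul_right (by simpa [mul_comm] using h1) hS

lemma perron_eq (hsym : A.IsSymm) (hx : ∀ i, 0 < x i)
    (heig : A.mulVec x = lam • x) (hc : ∀ i, lam * w i ≤ A.mulVec w i) :
    ∀ i, A.mulVec w i = lam * w i := by
  have hsum : ∑ i, x i * (lam * w i) = ∑ i, x i * (A.mulVec w) i := by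
    rw [perron_core hsym heig, Finset.mul_sum]
    apply Finset.sum_congr rfl
    intro i _; ring
  have hpt := (Finset.sum_eq_sum_iff_of_le
    (fun i _ => mul_le_mul_of_nonneg_left (hc i) (hx i).le)).mp hsum
  intro i
  exact (mul_left_cancel₀ (hx i).ne' (hpt i (Finset.mem_univ i))).symm
end Perron

lemma mulVec_pow_eig {n : ℕ} (A : Matrix (Fin n) (Fin n) ℝ) {lam : ℝ} {x : Fin n → ℝ}
    (h : A *ᵥ x = lam • x) : ∀ m, A ^ m *ᵥ x = lam ^ m • x := by
  intro m
  induction m with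
  | zero => simp
  | succ m ih =>
    rw [pow_succ, ← Matrix.mulVec_mulVec, h, Matrix.mulVec_smul, ih, smul_smul, pow_succ]
    ring_nf

lemma map_pow_nat {n : ℕ} (A : Matrix (Fin n) (Fin n) ℕ) (m : ℕ) :
    (A.map (fun a => (a : ℝ))) ^ m = (A ^ m).map (fun a => (a : ℝ)) := by
  have h : A.map (fun a => (a : ℝ)) = (Nat.castRingHom ℝ).mapMatrix A := rfl
  rw [h, ← map_pow]
  rfl

lemma entry00 (P Q : Matrix (Fin 1) (Fin 1) ℂ) : (P * Q) 0 0 = P 0 0 * Q 0 0 := by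
  rw [Matrix.mul_apply, Fin.sum_univ_one]

end Helpers

/-- The block-diagonal matrix `U_ρ = diag(ρ(t₁),…,ρ(tₙ))`. -/
noncomputable def uRho {Γ : Type*} [Group Γ] {n k : ℕ}
    (ρ : Γ →* Matrix.unitaryGroup (Fin k) ℂ) (t : Fin n → Γ) :
    Matrix (Fin n × Fin k) (Fin n × Fin k) ℂ :=
  fun p q =>
    if p.1 = q.1 then (ρ (t p.1) : Matrix (Fin k) (Fin k) ℂ) p.2 q.2 else 0

/-- `A(G) ⊗ I_k` for a natural-number adjacency matrix. -/
noncomputable def aRho {n : ℕ} (k : ℕ) (A : Matrix (Fin n) (Fin n) ℕ) :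
    Matrix (Fin n × Fin k) (Fin n × Fin k) ℂ :=
  Matrix.kroneckerMap (· * ·) (A.map (fun a => (a : ℂ)))
    (1 : Matrix (Fin k) (Fin k) ℂ)

lemma aRho_mulVec {n k : ℕ} (A : Matrix (Fin n) (Fin n) ℕ)
    (v : Fin n × Fin k → ℂ) (p : Fin n × Fin k) :
    (aRho k A *ᵥ v) p = ∑ j, (A p.1 j : ℂ) * v (j, p.2) := by
  obtain ⟨i, s⟩ := p
  simp only [aRho, Matrix.mulVec, dotProduct, Fintype.sum_prod_type,
    Matrix.kroneckerMap_apply, Matrix.map_apply, Matrix.one_apply, mul_ite, mul_one,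
    mul_zero, ite_mul, zero_mul]
  simp [Finset.sum_ite_eq]

lemma uRho_mulVec {Γ : Type*} [Group Γ] {n k : ℕ}
    (ρ : Γ →* Matrix.unitaryGroup (Fin k) ℂ) (t : Fin n → Γ)
    (y : Fin n × Fin k → ℂ) (i : Fin n) (s : Fin k) :
    (uRho ρ t *ᵥ y) (i, s) = ∑ r, (ρ (t i) : Matrix (Fin k) (Fin k) ℂ) s r * y (i, r) := by
  simp only [uRho, Matrix.mulVec, dotProduct, Fintype.sum_prod_type, ite_mul, zero_mul]
  simp [Finset.sum_ite_eq]

lemma mulVec_block {Γ : Type*} [Group Γ] {n k : ℕ}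
    (ρ : Γ →* Matrix.unitaryGroup (Fin k) ℂ) (t : Fin n → Γ)
    (A : Matrix (Fin n) (Fin n) ℕ) (v : Fin n × Fin k → ℂ) (i : Fin n) (s : Fin k) :
    ((uRho ρ t * aRho k A) *ᵥ v) (i, s)
      = ((ρ (t i) : Matrix (Fin k) (Fin k) ℂ) *ᵥ (fun r => ∑ j, (A i j : ℂ) * v (j, r))) s := by
  rw [← Matrix.mulVec_mulVec, uRho_mulVec]
  simp only [aRho_mulVec]
  rfl

/-- A matrix representation is irreducible if the only invariant subspaces are
`⊥` and `⊤`. -/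
def IsIrreducibleRep {Γ : Type*} [Group Γ] {m : ℕ}
    (ρ : Γ →* Matrix.unitaryGroup (Fin m) ℂ) : Prop :=
  ∀ W : Submodule ℂ (Fin m → ℂ),
    (∀ γ : Γ, ∀ v ∈ W, (ρ γ : Matrix (Fin m) (Fin m) ℂ).mulVec v ∈ W) →
      W = ⊥ ∨ W = ⊤

/-- Spectral collapse: let `G` be a finite undirected strongly connected
aperiodic (primitive) graph with vertices labelled by elements `t₁,…,tₙ`
generating a finite group `Γ`, such that every one-dimensional representation
of `Γ` taking the same value on all `tᵢ` is trivial.  Let `λ_max` be the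
Perron–Frobenius eigenvalue of `A(G)` (with strictly positive eigenvector).
Then for every nontrivial irreducible unitary representation `ρ` of `Γ`, the
spectral radius of `U_ρ (A(G) ⊗ I)` is strictly smaller than `λ_max`. -/
theorem stmt_16 {Γ : Type*} [Group Γ] [Fintype Γ] {n k : ℕ}
    (t : Fin n → Γ) (hgen : Subgroup.closure (Set.range t) = ⊤)
    (h1d : ∀ χ : Γ →* ℂˣ, (∀ i j : Fin n, χ (t i) = χ (t j)) → χ = 1)
    (A : Matrix (Fin n) (Fin n) ℕ) (hsym : A.IsSymm)
    (hprim : ∃ m : ℕ, 0 < m ∧ ∀ i j, 0 < (A ^ m) i j)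
    (lam : ℝ) (x : Fin n → ℝ) (hx : ∀ i, 0 < x i)
    (heig : (A.map (fun a => (a : ℝ))).mulVec x = lam • x)
    (ρ : Γ →* Matrix.unitaryGroup (Fin k) ℂ)
    (hirr : IsIrreducibleRep ρ)
    (hnontriv : ∃ γ, (ρ γ : Matrix (Fin k) (Fin k) ℂ) ≠ 1) :
    spectralRadius ℂ (uRho ρ t * aRho k A) < ENNReal.ofReal lam := by
  classical
  obtain ⟨m, hm0, hAm⟩ := hprim
  obtain ⟨γ₀, hγ₀⟩ := hnontriv
  rcases Nat.eq_zero_or_pos n with hn0 | hn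
  · exfalso
    have hre : Set.range t = ∅ := by subst hn0; exact Set.range_eq_empty t
    rw [hre, Subgroup.closure_empty] at hgen
    have hγ1 : γ₀ = 1 := by
      have h := Subgroup.mem_top γ₀
      rw [← hgen] at h
      exact Subgroup.mem_bot.mp h
    apply hγ₀
    rw [hγ1, _root_.map_one]
    rfl
  set j₀ : Fin n := ⟨0, hn⟩ with hj₀def
  set Ar : Matrix (Fin n) (Fin n) ℝ := A.map (fun a => (a : ℝ)) with hArdef
  have hArsymm : Ar.IsSymm := by
    ext i j
    have h := congrFun (congrFun hsym i) j
    simp only [Matrix.transpose_apply] at h ⊢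
    simp [hArdef, Matrix.map_apply, h]
  have hArw : ∀ (w : Fin n → ℝ) (i : Fin n), (Ar *ᵥ w) i = ∑ j, (A i j : ℝ) * w j := by
    intro w i; rfl
  -- lam > 0
  have hlamnn : 0 ≤ lam := by
    have h1 : (Ar *ᵥ x) j₀ = lam * x j₀ := by rw [heig]; rfl
    have h2 : 0 ≤ (Ar *ᵥ x) j₀ := by
      rw [hArw]
      exact Finset.sum_nonneg fun j _ => mul_nonneg (Nat.cast_nonneg _) (hx j).le
    nlinarith [hx j₀]
  have hlam : 0 < lam := by
    rcases hlamnn.lt_or_eq with h | h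
    · exact h
    · exfalso
      have hp := mulVec_pow_eig Ar heig m
      have h1 : (Ar ^ m *ᵥ x) j₀ = lam ^ m * x j₀ := by rw [hp]; rfl
      have h2 : 0 < (Ar ^ m *ᵥ x) j₀ := by
        rw [map_pow_nat]
        have h3 : ((A ^ m).map (fun a => (a : ℝ)) *ᵥ x) j₀ = ∑ j, ((A ^ m) j₀ j : ℝ) * x j := rfl
        rw [h3]
        apply Finset.sum_pos
        · intro j _
          exact mul_pos (by exact_mod_cast hAm j₀ j) (hx j)
        · exact ⟨j₀, Finset.mem_univ _⟩
      rw [h1, ← h, zero_pow hm0.ne', zero_mul] at h2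
      exact lt_irrefl _ h2
  -- main eigenvalue bound
  have key : ∀ μ ∈ spectrum ℂ (uRho ρ t * aRho k A), ‖μ‖ < lam := by
    intro μ hμ
    set M := uRho ρ t * aRho k A with hMdef
    have hdet : ((algebraMap ℂ (Matrix (Fin n × Fin k) (Fin n × Fin k) ℂ)) μ - M).det = 0 := by
      by_contra hd
      exact (spectrum.mem_iff.mp hμ)
        ((Matrix.isUnit_iff_isUnit_det _).mpr (isUnit_iff_ne_zero.mpr hd))
    obtain ⟨v, hv0, hv⟩ := Matrix.exists_mulVec_eq_zero_iff.mpr hdet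
    have hMv : M *ᵥ v = μ • v := by
      have h1 : ((algebraMap ℂ (Matrix (Fin n × Fin k) (Fin n × Fin k) ℂ)) μ - M) *ᵥ v
          = μ • v - M *ᵥ v := by
        rw [Matrix.sub_mulVec, Algebra.algebraMap_eq_smul_one, Matrix.smul_mulVec,
          Matrix.one_mulVec]
      rw [h1] at hv
      exact (sub_eq_zero.mp hv).symm
    set L := (WithLp.linearEquiv 2 ℂ (Fin k → ℂ)).symm with hLdef
    set vb : Fin n → EuclideanSpace ℂ (Fin k) := fun i => L (fun s => v (i, s)) with hvbdef
    set w : Fin n → ℝ := fun i => ‖vb i‖ with hwdef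
    set Sv : Fin n → (Fin k → ℂ) := fun i => fun r => ∑ j, (A i j : ℂ) * v (j, r) with hSvdef
    have hblock : ∀ i, (ρ (t i) : Matrix (Fin k) (Fin k) ℂ) *ᵥ Sv i = fun s => μ * v (i, s) := by
      intro i
      funext s
      have h1 := congrFun hMv (i, s)
      rw [mulVec_block ρ t A v i s] at h1
      exact h1
    have hSE : ∀ i, L (Sv i) = ∑ j, (A i j : ℂ) • vb j := by
      intro i
      have h1 : Sv i = ∑ j, (A i j : ℂ) • (fun s => v (j, s)) := by
        funext r
        simp [hSvdef, Finset.sum_apply, Pi.smul_apply, smul_eq_mul]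
      rw [h1, map_sum]
      simp only [_root_.map_smul]
      rfl
    have hnormSE : ∀ i, ‖L (Sv i)‖ = ‖μ‖ * w i := by
      intro i
      have h1 : Matrix.toEuclideanLin ((ρ (t i) : Matrix (Fin k) (Fin k) ℂ)) (L (Sv i))
          = L (fun s => μ * v (i, s)) := by
        rw [show L (Sv i) = WithLp.toLp 2 (Sv i) from rfl,
          Matrix.toEuclideanLin_apply_piLp_toLp, hblock i]
        rfl
      have h2 := norm_mulVec_unitary' (ρ (t i)).2 (L (Sv i))
      rw [h1] at h2
      have h3 : L (fun s => μ * v (i, s)) = μ • vb i := by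
        rw [show (fun s => μ * v (i, s)) = μ • (fun s => v (i, s)) from rfl, _root_.map_smul]
      rw [h3, norm_smul] at h2
      exact h2.symm
    have hAc : ∀ (i j : Fin n), ‖(A i j : ℂ) • vb j‖ = (A i j : ℝ) * w j := by
      intro i j
      rw [norm_smul]
      congr 1
      simp
    have hwle : ∀ i, ‖μ‖ * w i ≤ (Ar *ᵥ w) i := by
      intro i
      rw [← hnormSE i, hSE i, hArw]
      refine le_trans (norm_sum_le _ _) ?_
      apply Finset.sum_le_sum
      intro j _
      rw [hAc]
    have hwnn : ∀ i, 0 ≤ w i := fun i => norm_nonneg _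
    have hex : ∃ j, 0 < w j := by
      by_contra hc
      push_neg at hc
      apply hv0
      funext p
      have h1 : vb p.1 = 0 := norm_eq_zero.mp (le_antisymm (hc p.1) (hwnn p.1))
      have h2 : (fun s => v (p.1, s)) = (0 : Fin k → ℂ) := by
        have := congrArg L.symm h1
        rwa [LinearEquiv.symm_apply_apply, _root_.map_zero] at this
      exact congrFun h2 p.2
    obtain ⟨jw, hjw⟩ := hex
    have hle : ‖μ‖ ≤ lam := perron_le hArsymm hx heig hwnn hjw hwle
    by_contra hlt
    push_neg at hlt
    have heqμ : ‖μ‖ = lam := le_antisymm hle hlt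
    -- equality case
    have hweig : ∀ i, (Ar *ᵥ w) i = lam * w i :=
      perron_eq hArsymm hx heig (fun i => heqμ ▸ hwle i)
    have hweig' : Ar *ᵥ w = lam • w := funext fun i => hweig i
    have hwpos : ∀ i, 0 < w i := by
      intro i
      have hp := mulVec_pow_eig Ar hweig' m
      have h1 : (Ar ^ m *ᵥ w) i = lam ^ m * w i := by rw [hp]; rfl
      have h2 : ((A ^ m) i jw : ℝ) * w jw ≤ (Ar ^ m *ᵥ w) i := by
        rw [map_pow_nat]
        have h3 : ((A ^ m).map (fun a => (a : ℝ)) *ᵥ w) i = ∑ j, ((A ^ m) i j : ℝ) * w j := rfl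
        rw [h3]
        exact Finset.single_le_sum
          (fun j _ => mul_nonneg (Nat.cast_nonneg _) (hwnn j)) (Finset.mem_univ jw)
      have h4 : 0 < lam ^ m * w i := by
        have h5 : (0 : ℝ) < ((A ^ m) i jw : ℝ) * w jw :=
          mul_pos (by exact_mod_cast hAm i jw) hjw
        rw [← h1]; exact lt_of_lt_of_le h5 h2
      have h6 : 0 < lam ^ m := pow_pos hlam m
      nlinarith
    have hnormeq : ∀ i, ‖∑ j, (A i j : ℂ) • vb j‖ = ∑ j, ‖(A i j : ℂ) • vb j‖ := by
      intro i
      rw [← hSE i, hnormSE i, heqμ]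
      have h1 : ∑ j, ‖(A i j : ℂ) • vb j‖ = (Ar *ᵥ w) i := by
        rw [hArw]
        exact Finset.sum_congr rfl fun j _ => hAc i j
      rw [h1, hweig i]
    have hLSvne : ∀ i, L (Sv i) ≠ 0 := by
      intro i h0
      have h1 := hnormSE i
      rw [h0, norm_zero, heqμ] at h1
      exact absurd h1.symm (mul_pos hlam (hwpos i)).ne'
    have hvbne : ∀ j, vb j ≠ 0 := by
      intro j h0
      have := hwpos j
      rw [hwdef] at this
      simp only [h0, norm_zero] at this
      exact lt_irrefl _ this
    have hconv : ∀ (a : ℕ) (y : EuclideanSpace ℂ (Fin k)), (a : ℂ) • y = (a : ℝ) • y := by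
      intro a y
      rw [show ((a : ℕ) : ℂ) = algebraMap ℝ ℂ ((a : ℕ) : ℝ) by simp, algebraMap_smul]
    have hconvR : ∀ (a : ℝ) (y : EuclideanSpace ℂ (Fin k)), ((a : ℂ)) • y = a • y := by
      intro a y
      rw [show ((a : ℝ) : ℂ) = algebraMap ℝ ℂ a from rfl, algebraMap_smul]
    have hray : ∀ i j, 0 < A i j → ∃ r : ℝ, 0 < r ∧ vb j = r • L (Sv i) := by
      intro i j hA
      have hs := sameRay_of_norm_sum_eq (fun j => (A i j : ℂ) • vb j) (hnormeq i) j
      rw [← hSE i] at hs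
      have hne1 : (A i j : ℂ) • vb j ≠ 0 :=
        smul_ne_zero (by exact_mod_cast hA.ne') (hvbne j)
      obtain ⟨r₁, r₂, hr₁, hr₂, hr⟩ := hs.exists_pos hne1 (hLSvne i)
      have hAR : (0 : ℝ) < (A i j : ℝ) := by exact_mod_cast hA
      refine ⟨r₂ / (r₁ * (A i j : ℝ)), by positivity, ?_⟩
      rw [hconv, smul_smul] at hr
      have h1 : vb j = ((r₁ * (A i j : ℝ))⁻¹ * r₂) • L (Sv i) := by
        rw [← smul_smul, ← hr, smul_smul, inv_mul_cancel₀ (by positivity), one_smul]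
      rw [h1]
      congr 1
      field_simp
    set u : EuclideanSpace ℂ (Fin k) := vb j₀ with hudef
    set P : Fin n → Prop := fun j => ∃ r : ℝ, 0 < r ∧ vb j = r • u with hPdef
    have hstep : ∀ j j', 0 < (A * A) j j' → P j → P j' := by
      rintro j j' hB ⟨r, hr, hvbj⟩
      rw [Matrix.mul_apply] at hB
      have hex2 : ∃ i, 0 < A j i * A i j' := by
        by_contra hc
        push_neg at hc
        simp only [Nat.le_zero] at hc
        simp [Finset.sum_eq_zero (fun l _ => hc l)] at hB
      obtain ⟨i, hi⟩ := hex2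
      have hji : 0 < A j i := Nat.pos_of_ne_zero (by intro h0; simp [h0] at hi)
      have hij' : 0 < A i j' := Nat.pos_of_ne_zero (by intro h0; simp [h0] at hi)
      have hij : 0 < A i j := by
        have h := congrFun (congrFun hsym j) i
        simp only [Matrix.transpose_apply] at h
        rwa [← h] at hji
      obtain ⟨r₁, hr₁, h1⟩ := hray i j hij
      obtain ⟨r₂, hr₂, h2⟩ := hray i j' hij'
      refine ⟨r₂ / r₁ * r, by positivity, ?_⟩
      have h3 : L (Sv i) = r₁⁻¹ • vb j := by
        rw [h1, smul_smul, inv_mul_cancel₀ hr₁.ne', one_smul]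
      rw [h2, h3, hvbj, smul_smul, smul_smul]
      congr 1
    have hBm : ∀ j j', 0 < ((A * A) ^ m) j j' := by
      intro j j'
      have h1 : (A * A) ^ m = A ^ m * A ^ m := by
        rw [← pow_two, ← pow_mul, two_mul, pow_add]
      rw [h1, Matrix.mul_apply]
      apply Finset.sum_pos
      · intro l _
        exact mul_pos (hAm j l) (hAm l j')
      · exact ⟨j₀, Finset.mem_univ _⟩
    have hP : ∀ j, P j := fun j =>
      pos_entry_path (A * A) P hstep m j₀ j (hBm j₀ j) ⟨1, one_pos, (one_smul _ _).symm⟩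
    choose r hrpos hvb using hP
    have hu0 : u ≠ 0 := hvbne j₀
    have hwr : ∀ j, w j = r j * ‖u‖ := by
      intro j
      rw [hwdef]
      simp only
      rw [hvb j, norm_smul, Real.norm_eq_abs, abs_of_pos (hrpos j)]
    have hunorm : 0 < ‖u‖ := norm_pos_iff.mpr hu0
    have hre : ∀ i, ∑ j, (A i j : ℝ) * r j = lam * r i := by
      intro i
      have h1 := hweig i
      rw [hArw] at h1
      have h2 : ∑ j, (A i j : ℝ) * w j = (∑ j, (A i j : ℝ) * r j) * ‖u‖ := by
        rw [Finset.sum_mul]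
        exact Finset.sum_congr rfl fun j _ => by rw [hwr j]; ring
      rw [h2, hwr i] at h1
      have h3 : (∑ j, (A i j : ℝ) * r j) * ‖u‖ = (lam * r i) * ‖u‖ := by rw [h1]; ring
      exact mul_right_cancel₀ hunorm.ne' h3
    have hLSv : ∀ i, L (Sv i) = (lam * r i) • u := by
      intro i
      rw [hSE i]
      have h1 : ∀ j, (A i j : ℂ) • vb j = ((A i j : ℝ) * r j) • u := by
        intro j
        rw [hconv, hvb j, smul_smul]
      rw [Finset.sum_congr rfl fun j _ => h1 j, ← Finset.sum_smul, hre i]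
    -- common eigenvector equation
    set uf : Fin k → ℂ := fun s => v (j₀, s) with hufdef
    have huL : u = L uf := rfl
    have hufne : uf ≠ 0 := by
      intro h0
      apply hu0
      rw [huL, h0, _root_.map_zero]
    set cc : ℂ := μ / (lam : ℂ) with hccdef
    have heigu : ∀ i, (ρ (t i) : Matrix (Fin k) (Fin k) ℂ) *ᵥ uf = cc • uf := by
      intro i
      have h1 : Sv i = ((lam * r i : ℝ) : ℂ) • uf := by
        have h4 := congrArg L.symm (hLSv i)
        rw [LinearEquiv.symm_apply_apply, huL, ← hconvR (lam * r i) (L uf),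
          _root_.map_smul, LinearEquiv.symm_apply_apply] at h4
        exact h4
      have h5 : (fun s => μ * v (i, s)) = (μ * ((r i : ℝ) : ℂ)) • uf := by
        have h6 : (fun s => v (i, s)) = ((r i : ℝ) : ℂ) • uf := by
          have h7 := congrArg L.symm (hvb i)
          rw [huL, ← hconvR (r i) (L uf), _root_.map_smul] at h7
          simp only [LinearEquiv.symm_apply_apply] at h7
          exact h7
        funext s
        have h8 := congrFun h6 s
        simp only [Pi.smul_apply, smul_eq_mul] at h8 ⊢
        rw [h8]; ring
      have h8 := hblock i
      rw [h1, h5, Matrix.mulVec_smul] at h8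
      have h9 : ((lam * r i : ℝ) : ℂ) ≠ 0 := by
        have : (0:ℝ) < lam * r i := mul_pos hlam (hrpos i)
        exact_mod_cast this.ne'
      have h10 : (ρ (t i) : Matrix (Fin k) (Fin k) ℂ) *ᵥ uf
          = (((lam * r i : ℝ) : ℂ)⁻¹ * (μ * ((r i : ℝ) : ℂ))) • uf := by
        rw [← smul_smul, ← h8, smul_smul, inv_mul_cancel₀ h9, one_smul]
      rw [h10, hccdef]
      congr 1
      have hri : ((r i : ℝ) : ℂ) ≠ 0 := by exact_mod_cast (hrpos i).ne'
      have hlamc : ((lam : ℝ) : ℂ) ≠ 0 := by exact_mod_cast hlam.ne'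
      push_cast
      field_simp
    -- all of Γ acts on uf by scalars
    have hall : ∀ γ : Γ, ∃ d : ℂ, (ρ γ : Matrix (Fin k) (Fin k) ℂ) *ᵥ uf = d • uf := by
      set H : Subgroup Γ :=
        { carrier := {γ | ∃ d : ℂ, (ρ γ : Matrix (Fin k) (Fin k) ℂ) *ᵥ uf = d • uf}
          one_mem' := ⟨1, by rw [show ((ρ 1 : Matrix (Fin k) (Fin k) ℂ)) = 1 by
            rw [_root_.map_one]; rfl, Matrix.one_mulVec, one_smul]⟩
          mul_mem' := by
            rintro a b ⟨d₁, h₁⟩ ⟨d₂, h₂⟩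
            refine ⟨d₁ * d₂, ?_⟩
            have hcoe : (ρ (a * b) : Matrix (Fin k) (Fin k) ℂ)
                = (ρ a : Matrix (Fin k) (Fin k) ℂ) * (ρ b : Matrix (Fin k) (Fin k) ℂ) := by
              rw [_root_.map_mul]; rfl
            rw [hcoe, ← Matrix.mulVec_mulVec, h₂, Matrix.mulVec_smul, h₁, smul_smul, mul_comm]
          inv_mem' := by
            rintro a ⟨d, h⟩
            have hid : (ρ a⁻¹ : Matrix (Fin k) (Fin k) ℂ) * (ρ a : Matrix (Fin k) (Fin k) ℂ)
                = 1 := by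
              rw [show (ρ a⁻¹ : Matrix (Fin k) (Fin k) ℂ) * (ρ a : Matrix (Fin k) (Fin k) ℂ)
                  = ((ρ a⁻¹ * ρ a : Matrix.unitaryGroup (Fin k) ℂ) : Matrix (Fin k) (Fin k) ℂ)
                  from rfl, ← _root_.map_mul, inv_mul_cancel, _root_.map_one]
              rfl
            have h1 : (ρ a⁻¹ : Matrix (Fin k) (Fin k) ℂ) *ᵥ
                ((ρ a : Matrix (Fin k) (Fin k) ℂ) *ᵥ uf) = uf := by
              rw [Matrix.mulVec_mulVec, hid, Matrix.one_mulVec]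
            rw [h, Matrix.mulVec_smul] at h1
            have hd0 : d ≠ 0 := by
              rintro rfl
              rw [zero_smul] at h1
              exact hufne h1.symm
            refine ⟨d⁻¹, ?_⟩
            have h2 : d⁻¹ • (d • ((ρ a⁻¹ : Matrix (Fin k) (Fin k) ℂ) *ᵥ uf)) = d⁻¹ • uf :=
              congrArg (fun z => d⁻¹ • z) h1
            rwa [smul_smul, inv_mul_cancel₀ hd0, one_smul] at h2 }
      intro γ
      have hsub : Set.range t ⊆ (H : Set Γ) := by
        rintro _ ⟨i, rfl⟩
        exact ⟨cc, heigu i⟩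
      have hcl : Subgroup.closure (Set.range t) ≤ H := (Subgroup.closure_le H).mpr hsub
      rw [hgen] at hcl
      exact hcl (Subgroup.mem_top γ)
    -- invariant subspace
    have hWinv : ∀ γ : Γ, ∀ y ∈ Submodule.span ℂ {uf},
        (ρ γ : Matrix (Fin k) (Fin k) ℂ).mulVec y ∈ Submodule.span ℂ {uf} := by
      intro γ y hy
      rw [Submodule.mem_span_singleton] at hy
      obtain ⟨a, rfl⟩ := hy
      obtain ⟨d, hd⟩ := hall γ
      rw [Matrix.mulVec_smul, hd, smul_smul]
      exact Submodule.mem_span_singleton.mpr ⟨a * d, rfl⟩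
    rcases hirr (Submodule.span ℂ {uf}) hWinv with hbot | htop
    · exact hufne (Submodule.span_singleton_eq_bot.mp hbot)
    -- k = 1
    have hk1 : k = 1 := by
      have h1 : Module.finrank ℂ (Fin k → ℂ) = k := Module.finrank_fin_fun ℂ
      have h2 : Module.finrank ℂ (Submodule.span ℂ {uf} : Submodule ℂ (Fin k → ℂ)) = 1 :=
        finrank_span_singleton hufne
      rw [htop, finrank_top] at h2
      rw [h1] at h2
      exact h2
    subst hk1
    -- one-dimensional character
    have hcoe_mul : ∀ a b : Γ, (ρ (a * b) : Matrix (Fin 1) (Fin 1) ℂ)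
        = (ρ a : Matrix (Fin 1) (Fin 1) ℂ) * (ρ b : Matrix (Fin 1) (Fin 1) ℂ) := by
      intro a b; rw [_root_.map_mul]; rfl
    set χ : Γ →* ℂˣ :=
      { toFun := fun γ =>
          { val := (ρ γ : Matrix (Fin 1) (Fin 1) ℂ) 0 0
            inv := (ρ γ⁻¹ : Matrix (Fin 1) (Fin 1) ℂ) 0 0
            val_inv := by
              rw [← entry00, ← hcoe_mul, mul_inv_cancel,
                show ((ρ 1 : Matrix (Fin 1) (Fin 1) ℂ)) = 1 by rw [_root_.map_one]; rfl]
              simp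
            inv_val := by
              rw [← entry00, ← hcoe_mul, inv_mul_cancel,
                show ((ρ 1 : Matrix (Fin 1) (Fin 1) ℂ)) = 1 by rw [_root_.map_one]; rfl]
              simp }
        map_one' := by
          ext
          simp only [Units.val_one]
          rw [show ((ρ 1 : Matrix (Fin 1) (Fin 1) ℂ)) = 1 by rw [_root_.map_one]; rfl]
          simp
        map_mul' := by
          intro a b
          ext
          simp only [Units.val_mul]
          rw [hcoe_mul, entry00] } with hχdef
    have huf0 : uf 0 ≠ 0 := by
      intro h0
      apply hufne
      funext s
      rw [show s = 0 from Subsingleton.elim s 0, h0]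
      rfl
    have hχt : ∀ i : Fin n, (ρ (t i) : Matrix (Fin 1) (Fin 1) ℂ) 0 0 = cc := by
      intro i
      have h1 := congrFun (heigu i) 0
      have h0 : ((ρ (t i) : Matrix (Fin 1) (Fin 1) ℂ) *ᵥ uf) 0
          = (ρ (t i) : Matrix (Fin 1) (Fin 1) ℂ) 0 0 * uf 0 := by
        show ∑ s, (ρ (t i) : Matrix (Fin 1) (Fin 1) ℂ) 0 s * uf s = _
        rw [Fin.sum_univ_one]
      rw [h0] at h1
      simp only [Pi.smul_apply, smul_eq_mul] at h1
      exact mul_right_cancel₀ huf0 h1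
    have hχtriv : χ = 1 := by
      apply h1d
      intro i j
      ext
      simp only [hχdef, MonoidHom.coe_mk, OneHom.coe_mk]
      rw [hχt i, hχt j]
    have hρtriv : (ρ γ₀ : Matrix (Fin 1) (Fin 1) ℂ) = 1 := by
      have h1 : χ γ₀ = 1 := by rw [hχtriv]; rfl
      have h2 : (ρ γ₀ : Matrix (Fin 1) (Fin 1) ℂ) 0 0 = 1 := by
        have := congrArg Units.val h1
        simpa [hχdef] using this
      ext a b
      rw [show a = 0 from Subsingleton.elim a 0, show b = 0 from Subsingleton.elim b 0, h2]
      simp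
    exact hγ₀ hρtriv
  -- conclude from key
  have hfin := Matrix.finite_spectrum (uRho ρ t * aRho k A)
  have hbd : spectralRadius ℂ (uRho ρ t * aRho k A)
      ≤ hfin.toFinset.sup (fun μ => (‖μ‖₊ : ℝ≥0∞)) := by
    rw [spectralRadius]
    exact iSup₂_le fun μ hμ =>
      Finset.le_sup (f := fun μ => (‖μ‖₊ : ℝ≥0∞)) (hfin.mem_toFinset.mpr hμ)
  refine lt_of_le_of_lt hbd ?_
  rw [Finset.sup_lt_iff (by simpa using ENNReal.ofReal_pos.mpr hlam)]
  intro μ hμ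
  have h1 := key μ (hfin.mem_toFinset.mp hμ)
  rw [← enorm_eq_nnnorm, ← ofReal_norm]
  exact (ENNReal.ofReal_lt_ofReal_iff hlam).mpr h1
end
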